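/- arXiv:2106.02980 — 2 statements merged into one kernel-verified Lean document; each statement's English description precedes it below -/
import Mathlib

section
/- Let C = Diag(d) where d ∈ ℝ^n satisfies either d₁ ≥ d₂ ≥ ⋯ ≥ dₙ > 1 or 1 > d₁ ≥ d₂ ≥ ⋯ ≥ dₙ > 0, let 0 < s < n, and let x̂ be a uniform optimal solution of max{f(C,s;x) : x ∈ P(n,s)} (i.e., an optimal solution with x̂₁ ≥ x̂₂ ≥ ⋯ ≥ x̂ₙ and x̂ᵢ = x̂ⱼ whenever dᵢ = dⱼ). Then for all 1 ≤ i < j ≤ n: x̂ᵢ − x̂ⱼ ≤ 1/(dⱼ²−1) − 1/(dᵢ²−1). Moreover, if additionally 1 > x̂ᵢ ≥ x̂ⱼ > 0, then x̂ᵢ − x̂ⱼ = 1/(dⱼ²−1) − 1/(dᵢ²−1). -/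
open Matrix Real Set

noncomputable section

/-- The feasible polytope `P(n,s)`. -/
def PP (n s : ℕ) : Set (Fin n → ℝ) :=
  {x | (∑ i, x i) = (s : ℝ) ∧ ∀ i, 0 ≤ x i ∧ x i ≤ 1}

/-- The linx objective `f(C,s;x)`. -/
def fLinx {n : ℕ} (C : Matrix (Fin n) (Fin n) ℝ) (x : Fin n → ℝ) : ℝ :=
  (1 / 2) * Real.log ((C * Matrix.diagonal x * C + Matrix.diagonal fun i => 1 - x i).det)

lemma fLinx_diag {n : ℕ} (d x : Fin n → ℝ) :
    fLinx (Matrix.diagonal d) x = (1/2) * Real.log (∏ k, ((d k ^ 2 - 1) * x k + 1)) := by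
  unfold fLinx
  rw [Matrix.diagonal_mul_diagonal, Matrix.diagonal_mul_diagonal, Matrix.diagonal_add,
    Matrix.det_diagonal]
  congr 2
  apply Finset.prod_congr rfl
  intro k _
  show d k * x k * d k + (1 - x k) = _
  ring

set_option maxHeartbeats 1000000 in
theorem stmt_4 (n s : ℕ) (hs : 0 < s) (hsn : s < n)
    (d : Fin n → ℝ) (hmono : Antitone d)
    (hd : (∀ i, 1 < d i) ∨ (∀ i, 0 < d i ∧ d i < 1))
    (xh : Fin n → ℝ) (hxhP : xh ∈ PP n s)
    (hopt : ∀ x ∈ PP n s, fLinx (Matrix.diagonal d) x ≤ fLinx (Matrix.diagonal d) xh)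
    (hxhmono : Antitone xh) (hxhunif : ∀ i j : Fin n, d i = d j → xh i = xh j) :
    ∀ i j : Fin n, i < j →
      (xh i - xh j ≤ 1 / (d j ^ 2 - 1) - 1 / (d i ^ 2 - 1)) ∧
      (xh i < 1 → xh j ≤ xh i → 0 < xh j →
        xh i - xh j = 1 / (d j ^ 2 - 1) - 1 / (d i ^ 2 - 1)) := by
  classical
  intro i j hij
  have hij' : i ≠ j := ne_of_lt hij
  obtain ⟨hsum, hbd⟩ := hxhP
  have hu0 : 0 ≤ xh i := (hbd i).1
  have hu1 : xh i ≤ 1 := (hbd i).2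
  have hv0 : 0 ≤ xh j := (hbd j).1
  have hv1 : xh j ≤ 1 := (hbd j).2
  have hvu : xh j ≤ xh i := hxhmono hij.le
  have hdji : d j ≤ d i := hmono hij.le
  have hdj0 : 0 < d j := by
    rcases hd with h | h
    · linarith [h j]
    · exact (h j).1
  have hba : d j ^ 2 - 1 ≤ d i ^ 2 - 1 := by nlinarith
  have hab : 0 < (d i ^ 2 - 1) * (d j ^ 2 - 1) := by
    rcases hd with h | h
    · have h1 : 0 < d i ^ 2 - 1 := by nlinarith [h i]
      have h2 : 0 < d j ^ 2 - 1 := by nlinarith [h j]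
      exact mul_pos h1 h2
    · have h1 : d i ^ 2 - 1 < 0 := by nlinarith [(h i).1, (h i).2]
      have h2 : d j ^ 2 - 1 < 0 := by nlinarith [(h j).1, (h j).2]
      exact mul_pos_of_neg_of_neg h1 h2
  have hFpos : ∀ (k : Fin n) (t : ℝ), 0 ≤ t → t ≤ 1 → 0 < (d k ^ 2 - 1) * t + 1 := by
    intro k t ht0 ht1
    rcases hd with h | h
    · have h1 : 0 ≤ (d k ^ 2 - 1) * t :=
        mul_nonneg (by nlinarith [h k]) ht0
      linarith
    · nlinarith [(h k).1, (h k).2, mul_nonneg (sub_nonneg.2 ht1) (sub_nonneg.2 (h k).2.le)]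
  -- key exchange inequality
  have key : ∀ t t' : ℝ, t + t' = xh i + xh j → 0 ≤ t → t ≤ 1 → 0 ≤ t' → t' ≤ 1 →
      ((d i ^ 2 - 1) * t + 1) * ((d j ^ 2 - 1) * t' + 1) ≤
      ((d i ^ 2 - 1) * xh i + 1) * ((d j ^ 2 - 1) * xh j + 1) := by
    intro t t' htt' ht0 ht1 ht'0 ht'1
    set x' : Fin n → ℝ := fun k => if k = i then t else if k = j then t' else xh k with hx'def
    have hx'i : x' i = t := by simp [hx'def]
    have hx'j : x' j = t' := by simp [hx'def, Ne.symm hij']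
    have hx'k : ∀ k, k ≠ i → k ≠ j → x' k = xh k := by
      intro k h1 h2; simp [hx'def, h1, h2]
    have hx'bd : ∀ k, 0 ≤ x' k ∧ x' k ≤ 1 := by
      intro k
      by_cases h1 : k = i
      · subst h1; rw [hx'i]; exact ⟨ht0, ht1⟩
      · by_cases h2 : k = j
        · subst h2; rw [hx'j]; exact ⟨ht'0, ht'1⟩
        · rw [hx'k k h1 h2]; exact hbd k
    have hx'P : x' ∈ PP n s := by
      refine ⟨?_, hx'bd⟩
      have hrw : ∀ k, x' k = xh k + ((if k = i then t - xh i else 0) +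
          (if k = j then t' - xh j else 0)) := by
        intro k
        by_cases h1 : k = i
        · subst h1; rw [hx'i, if_pos rfl, if_neg hij']; ring
        · by_cases h2 : k = j
          · subst h2; rw [hx'j, if_neg h1, if_pos rfl]; ring
          · rw [hx'k k h1 h2, if_neg h1, if_neg h2]; ring
      have h1 : ∑ k, x' k = ∑ k, (xh k + ((if k = i then t - xh i else 0) +
          (if k = j then t' - xh j else 0))) := Finset.sum_congr rfl fun k _ => hrw k
      rw [h1, Finset.sum_add_distrib, Finset.sum_add_distrib, hsum]
      rw [Finset.sum_ite_eq' Finset.univ i (fun _ => t - xh i),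
        Finset.sum_ite_eq' Finset.univ j (fun _ => t' - xh j)]
      simp only [Finset.mem_univ, if_true]
      linarith
    have hP'pos : 0 < ∏ k, ((d k ^ 2 - 1) * x' k + 1) :=
      Finset.prod_pos fun k _ => hFpos k _ (hx'bd k).1 (hx'bd k).2
    have hPpos : 0 < ∏ k, ((d k ^ 2 - 1) * xh k + 1) :=
      Finset.prod_pos fun k _ => hFpos k _ (hbd k).1 (hbd k).2
    have hle := hopt x' hx'P
    rw [fLinx_diag, fLinx_diag] at hle
    have hlog : Real.log (∏ k, ((d k ^ 2 - 1) * x' k + 1)) ≤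
        Real.log (∏ k, ((d k ^ 2 - 1) * xh k + 1)) := by linarith
    have hPle : (∏ k, ((d k ^ 2 - 1) * x' k + 1)) ≤ ∏ k, ((d k ^ 2 - 1) * xh k + 1) :=
      (Real.log_le_log_iff hP'pos hPpos).mp hlog
    have hmemj : j ∈ Finset.univ.erase i :=
      Finset.mem_erase.mpr ⟨Ne.symm hij', Finset.mem_univ j⟩
    have hQpos : 0 < ∏ k ∈ (Finset.univ.erase i).erase j, ((d k ^ 2 - 1) * xh k + 1) :=
      Finset.prod_pos fun k _ => hFpos k _ (hbd k).1 (hbd k).2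
    have hdecomp : ∀ y : Fin n → ℝ, (∀ k, k ≠ i → k ≠ j → y k = xh k) →
        (∏ k, ((d k ^ 2 - 1) * y k + 1)) =
        (((d i ^ 2 - 1) * y i + 1) * ((d j ^ 2 - 1) * y j + 1)) *
          ∏ k ∈ (Finset.univ.erase i).erase j, ((d k ^ 2 - 1) * xh k + 1) := by
      intro y hy
      rw [← Finset.mul_prod_erase Finset.univ _ (Finset.mem_univ i),
        ← Finset.mul_prod_erase _ _ hmemj, ← mul_assoc]
      congr 1
      apply Finset.prod_congr rfl
      intro k hk
      have hkj : k ≠ j := (Finset.mem_erase.mp hk).1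
      have hki : k ≠ i := (Finset.mem_erase.mp (Finset.mem_erase.mp hk).2).1
      rw [hy k hki hkj]
    rw [hdecomp x' hx'k, hdecomp xh (fun _ _ _ => rfl), hx'i, hx'j] at hPle
    exact le_of_mul_le_mul_right hPle hQpos
  -- the inequality part
  have ha0 : d i ^ 2 - 1 ≠ 0 := by
    intro h; rw [h] at hab; simp at hab
  have hb0 : d j ^ 2 - 1 ≠ 0 := by
    intro h; rw [h] at hab; simp at hab
  have hba' : 0 < (d j ^ 2 - 1) * (d i ^ 2 - 1) := by rw [mul_comm]; exact hab
  have goal1 : xh i - xh j ≤ 1 / (d j ^ 2 - 1) - 1 / (d i ^ 2 - 1) := by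
    rw [div_sub_div _ _ hb0 ha0, le_div_iff₀ hba']
    by_contra hcon
    push_neg at hcon
    obtain ⟨c, hc, hcdef⟩ : ∃ c : ℝ, 0 < c ∧ c = (xh i - xh j) * ((d j ^ 2 - 1) * (d i ^ 2 - 1)) -
        ((d i ^ 2 - 1) - (d j ^ 2 - 1)) := ⟨_, by nlinarith [hcon], rfl⟩
    have huvpos : 0 < xh i - xh j := by nlinarith [hc, hba, hba', hcdef]
    have hup : 0 < xh i := by linarith
    have hvl : xh j < 1 := by linarith
    obtain ⟨e, hE0, hEu, hEv, hEc⟩ : ∃ e : ℝ, 0 < e ∧ e ≤ xh i ∧ e ≤ 1 - xh j ∧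
        (d j ^ 2 - 1) * (d i ^ 2 - 1) * e ≤ c / 2 := by
      refine ⟨min (min (xh i) (1 - xh j)) (c / (2 * ((d j ^ 2 - 1) * (d i ^ 2 - 1)))),
        lt_min (lt_min hup (by linarith)) (div_pos hc (by linarith)),
        le_trans (min_le_left _ _) (min_le_left _ _),
        le_trans (min_le_left _ _) (min_le_right _ _), ?_⟩
      have h1 : min (min (xh i) (1 - xh j)) (c / (2 * ((d j ^ 2 - 1) * (d i ^ 2 - 1)))) ≤
          c / (2 * ((d j ^ 2 - 1) * (d i ^ 2 - 1))) := min_le_right _ _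
      have h2 : (d j ^ 2 - 1) * (d i ^ 2 - 1) *
          (c / (2 * ((d j ^ 2 - 1) * (d i ^ 2 - 1)))) = c / 2 := by
        field_simp
      calc (d j ^ 2 - 1) * (d i ^ 2 - 1) *
            min (min (xh i) (1 - xh j)) (c / (2 * ((d j ^ 2 - 1) * (d i ^ 2 - 1))))
          ≤ (d j ^ 2 - 1) * (d i ^ 2 - 1) *
            (c / (2 * ((d j ^ 2 - 1) * (d i ^ 2 - 1)))) :=
            mul_le_mul_of_nonneg_left h1 hba'.le
        _ = c / 2 := h2
    have hK := key (xh i - e) (xh j + e) (by ring) (by linarith) (by linarith)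
      (by linarith) (by linarith)
    have hstep : e * c ≤ (d j ^ 2 - 1) * (d i ^ 2 - 1) * e ^ 2 := by
      rw [hcdef]; linarith [hK]
    have hstep2 := mul_le_mul_of_nonneg_right hEc hE0.le
    have hstep3 := mul_pos hE0 hc
    nlinarith [hstep, hstep2, hstep3]
  refine ⟨goal1, fun hu1' hvu' hv0' => ?_⟩
  by_contra hne
  have hlt : xh i - xh j < 1 / (d j ^ 2 - 1) - 1 / (d i ^ 2 - 1) := lt_of_le_of_ne goal1 hne
  rw [div_sub_div _ _ hb0 ha0, lt_div_iff₀ hba'] at hlt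
  obtain ⟨c, hc, hcdef⟩ : ∃ c : ℝ, 0 < c ∧ c = ((d i ^ 2 - 1) - (d j ^ 2 - 1)) -
      (xh i - xh j) * ((d j ^ 2 - 1) * (d i ^ 2 - 1)) := ⟨_, by nlinarith [hlt], rfl⟩
  obtain ⟨e, hE0, hEu, hEv, hEc⟩ : ∃ e : ℝ, 0 < e ∧ e ≤ 1 - xh i ∧ e ≤ xh j ∧
      (d j ^ 2 - 1) * (d i ^ 2 - 1) * e ≤ c / 2 := by
    refine ⟨min (min (1 - xh i) (xh j)) (c / (2 * ((d j ^ 2 - 1) * (d i ^ 2 - 1)))),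
      lt_min (lt_min (by linarith) hv0') (div_pos hc (by linarith)),
      le_trans (min_le_left _ _) (min_le_left _ _),
      le_trans (min_le_left _ _) (min_le_right _ _), ?_⟩
    have h1 : min (min (1 - xh i) (xh j)) (c / (2 * ((d j ^ 2 - 1) * (d i ^ 2 - 1)))) ≤
        c / (2 * ((d j ^ 2 - 1) * (d i ^ 2 - 1))) := min_le_right _ _
    have h2 : (d j ^ 2 - 1) * (d i ^ 2 - 1) *
        (c / (2 * ((d j ^ 2 - 1) * (d i ^ 2 - 1)))) = c / 2 := by
      field_simp
    calc (d j ^ 2 - 1) * (d i ^ 2 - 1) *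
          min (min (1 - xh i) (xh j)) (c / (2 * ((d j ^ 2 - 1) * (d i ^ 2 - 1))))
        ≤ (d j ^ 2 - 1) * (d i ^ 2 - 1) *
          (c / (2 * ((d j ^ 2 - 1) * (d i ^ 2 - 1)))) :=
          mul_le_mul_of_nonneg_left h1 hba'.le
      _ = c / 2 := h2
  have hK := key (xh i + e) (xh j - e) (by ring) (by linarith) (by linarith)
    (by linarith) (by linarith)
  have hstep : e * c ≤ (d j ^ 2 - 1) * (d i ^ 2 - 1) * e ^ 2 := by
    rw [hcdef]; linarith [hK]
  have hstep2 := mul_le_mul_of_nonneg_right hEc hE0.le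
  have hstep3 := mul_pos hE0 hc
  nlinarith [hstep, hstep2, hstep3]
end
end

section
/- Let C₂ = [[a,c],[c,b]] be a 2×2 real symmetric positive-semidefinite matrix with a ≥ b, and let M₂* be an optimal order-2 mask, i.e., linx(C₂,1;M₂*) ≤ linx(C₂,1;M) for every order-2 mask M. Set g(a,b,c) := exp(2·linx(C₂,1;M₂*)). Then linx(C₂,1) − linx(C₂,1;M₂*) ≥ (1/2)·log( ((c²+1−ab)² + (a+b)²) / (4·g(a,b,c)) ). -/
open Matrix Real Set

noncomputable section

/-- The linx bound `linx(C,s)`. -/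
def linx (n s : ℕ) (C : Matrix (Fin n) (Fin n) ℝ) : ℝ :=
  sSup (fLinx C '' PP n s)

/-- A mask of order `n`: a positive-semidefinite matrix with unit diagonal. -/
def IsMask {n : ℕ} (M : Matrix (Fin n) (Fin n) ℝ) : Prop :=
  M.PosSemidef ∧ ∀ i, M i i = 1

/-- The masked linx bound `linx(C,s;M)`. -/
def linxMask (n s : ℕ) (C M : Matrix (Fin n) (Fin n) ℝ) : ℝ :=
  sSup (fLinx (Matrix.hadamard C M) '' PP n s)

/-!
The centre `x = (1/2, 1/2)` of `P(2,1)` is feasible, and there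
`C₂ Diag(x) C₂ + Diag(e - x) = (C₂² + I)/2`, whose determinant is
`|det(C₂ + iI)|² / 4 = ((c² + 1 - ab)² + (a + b)²) / 4`. Hence `linx(C₂,1)` is at least
half the logarithm of this, and subtracting `log g / 2 = linx(C₂,1;M₂*)` gives the bound.
-/

lemma isCompact_PP (n s : ℕ) : IsCompact (PP n s) := by
  refine isCompact_Icc.of_isClosed_subset ?_ (fun x hx => ⟨fun i => (hx.2 i).1, fun i => (hx.2 i).2⟩)
  simp only [PP, ofPred_and, ofPred_forall]
  exact (isClosed_eq (by fun_prop) continuous_const).inter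
    (isClosed_iInter fun i => (isClosed_le continuous_const (continuous_apply i)).inter
      (isClosed_le (continuous_apply i) continuous_const))

lemma fLinx_le_abs_det {n : ℕ} (C : Matrix (Fin n) (Fin n) ℝ) (x : Fin n → ℝ) :
    fLinx C x ≤ |(C * diagonal x * C + diagonal fun i => 1 - x i).det| / 2 := by
  have := Real.log_le_self (abs_nonneg (C * diagonal x * C + diagonal fun i => 1 - x i).det)
  rw [Real.log_abs] at this
  rw [fLinx]; linarith

lemma bddAbove_fLinx_image (n s : ℕ) (C : Matrix (Fin n) (Fin n) ℝ) :
    BddAbove (fLinx C '' PP n s) := by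
  obtain ⟨B, hB⟩ := (isCompact_PP n s).bddAbove_image
    (f := fun x => |(C * diagonal x * C + diagonal fun i => 1 - x i).det| / 2) (by fun_prop)
  exact ⟨B, forall_mem_image.2 fun x hx => (fLinx_le_abs_det C x).trans (hB ⟨x, hx, rfl⟩)⟩

lemma fLinx_le_linx {n s : ℕ} (C : Matrix (Fin n) (Fin n) ℝ) {x : Fin n → ℝ} (hx : x ∈ PP n s) :
    fLinx C x ≤ linx n s C :=
  le_csSup (bddAbove_fLinx_image n s C) ⟨x, hx, rfl⟩

lemma half_mem_PP_two_one : ![1 / 2, 1 / 2] ∈ PP 2 1 :=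
  ⟨by norm_num [Fin.sum_univ_two], fun i => by fin_cases i <;> norm_num⟩

lemma fLinx_fin_two_half (a b c : ℝ) :
    fLinx !![a, c; c, b] ![1 / 2, 1 / 2]
      = 1 / 2 * Real.log (((c ^ 2 + 1 - a * b) ^ 2 + (a + b) ^ 2) / 4) := by
  rw [fLinx, diagonal_fin_two, diagonal_fin_two, mul_fin_two, mul_fin_two, det_fin_two]
  congr 2
  simp only [one_div, Fin.isValue, cons_val_zero, mul_zero, add_zero, cons_val_one, cons_val_fin_one,
    zero_add, Matrix.add_apply, of_apply, cons_val']
  ring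

lemma fin_two_numerator_pos (a b c : ℝ) : 0 < (c ^ 2 + 1 - a * b) ^ 2 + (a + b) ^ 2 := by
  rcases eq_or_ne (a + b) 0 with h | h
  · obtain rfl : b = -a := by linarith
    nlinarith [sq_nonneg a, sq_nonneg c]
  · positivity

theorem stmt_9_general (a b c : ℝ)
    (Mstar : Matrix (Fin 2) (Fin 2) ℝ)
    (g : ℝ) (hg : g = Real.exp (2 * linxMask 2 1 !![a, c; c, b] Mstar)) :
    (1 / 2) * Real.log (((c ^ 2 + 1 - a * b) ^ 2 + (a + b) ^ 2) / (4 * g))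
      ≤ linx 2 1 !![a, c; c, b] - linxMask 2 1 !![a, c; c, b] Mstar := by
  have hcentre := fLinx_le_linx !![a, c; c, b] half_mem_PP_two_one
  rw [fLinx_fin_two_half] at hcentre
  have hN : ((c ^ 2 + 1 - a * b) ^ 2 + (a + b) ^ 2) / 4 ≠ 0 := by
    have := fin_two_numerator_pos a b c; positivity
  rw [← div_div, Real.log_div hN (hg ▸ (Real.exp_pos _).ne'), hg, Real.log_exp]
  linarith

theorem stmt_9 (a b c : ℝ) (hab : b ≤ a)
    (hC : (!![a, c; c, b] : Matrix (Fin 2) (Fin 2) ℝ).PosSemidef)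
    (Mstar : Matrix (Fin 2) (Fin 2) ℝ) (hMstar : IsMask Mstar)
    (hopt : ∀ M : Matrix (Fin 2) (Fin 2) ℝ, IsMask M →
      linxMask 2 1 !![a, c; c, b] Mstar ≤ linxMask 2 1 !![a, c; c, b] M)
    (g : ℝ) (hg : g = Real.exp (2 * linxMask 2 1 !![a, c; c, b] Mstar)) :
    (1 / 2) * Real.log (((c ^ 2 + 1 - a * b) ^ 2 + (a + b) ^ 2) / (4 * g))
      ≤ linx 2 1 !![a, c; c, b] - linxMask 2 1 !![a, c; c, b] Mstar :=
  stmt_9_general a b c Mstar g hg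
end
end
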